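/- arXiv:2301.07544 — 2 statements merged into one kernel-verified Lean document; each statement's English description precedes it below -/
import Mathlib

section
/- For an infinite path π through a finite cyclic tree with Inf(π) = Occ(π), the set of nodes lying between some companion and its bud that are infinitely visited, C[η] where η = Occ(π) ∩ dom(β), contains Inf(π): every infinitely visited node s admits a bud t ∈ η with β(t) ≤ s ≤ t. -/
/-- A cyclic tree: a finite prefix-closed set of nodes `T ⊆ ω*` together with a
partial map `β` from leaves of `T` to inner nodes with `β(t) < t` in the prefix order. -/
structure CyclicTree where
  T : Finset (List ℕ)
  root_mem : ([] : List ℕ) ∈ T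
  prefix_closed : ∀ ⦃s t : List ℕ⦄, t ∈ T → s <+: t → s ∈ T
  β : List ℕ → Option (List ℕ)
  β_spec : ∀ t c : List ℕ, β t = some c →
    t ∈ T ∧ c ∈ T ∧ c <+: t ∧ c ≠ t ∧
    (∀ i : ℕ, t ++ [i] ∉ T) ∧ (∃ i : ℕ, c ++ [i] ∈ T)

/-- One step of a path through a cyclic tree: either to a child, or from a bud to
its companion. -/
def CyclicTree.Step (C : CyclicTree) (s t : List ℕ) : Prop :=
  (t ∈ C.T ∧ ∃ i : ℕ, t = s ++ [i]) ∨ C.β s = some t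

/-- An infinite path through a cyclic tree. -/
def CyclicTree.IsPath (C : CyclicTree) (π : ℕ → List ℕ) : Prop :=
  (∀ i, π i ∈ C.T) ∧ ∀ i, C.Step (π i) (π (i + 1))

/-- `Inf(π)`: nodes visited infinitely often by `π`. -/
def PathInf (π : ℕ → List ℕ) : Set (List ℕ) := {s | ∀ N, ∃ i ≥ N, π i = s}

/-- `Occ(π)`: nodes visited at least once by `π`. -/
def PathOcc (π : ℕ → List ℕ) : Set (List ℕ) := {s | ∃ i, π i = s}

/-
Between two visits of `s`, the path starts inside the subtree of `s` and ends at `s`. Steps to a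
child never reach `s` from strictly below, so the path can only get back to `s` through a back edge
from some bud `t ≥ s` to a companion `β(t) ≤ s`; that bud is visited by `π`.
-/

namespace CyclicTree

variable {C : CyclicTree}

theorem Step.prefix_ne_or_companion_prefix {s u v : List ℕ} (h : C.Step u v) (hs : s <+: u) :
    (s <+: v ∧ s ≠ v) ∨ ∃ c, C.β u = some c ∧ c <+: s := by
  rcases h with ⟨-, a, rfl⟩ | hβ
  · refine .inl ⟨hs.trans (List.prefix_append _ _), ?_⟩
    rintro rfl
    have := hs.length_le
    simp at this
  · obtain ⟨-, -, hvu, -⟩ := C.β_spec _ _ hβ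
    rcases List.prefix_or_prefix_of_prefix hvu hs with hvs | hsv
    · exact .inr ⟨v, hβ, hvs⟩
    · by_cases hsv' : s = v
      · exact .inr ⟨v, hβ, hsv' ▸ List.prefix_rfl⟩
      · exact .inl ⟨hsv, hsv'⟩

theorem exists_bud_of_return {π : ℕ → List ℕ} (hπ : ∀ i, C.Step (π i) (π (i + 1)))
    {s : List ℕ} {m k : ℕ} (hs : s <+: π m) (hmk : m < k) (hk : π k = s) :
    ∃ i, ∃ c, C.β (π i) = some c ∧ c <+: s ∧ s <+: π i := by
  obtain ⟨n, rfl⟩ := Nat.exists_eq_add_of_lt hmk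
  induction n generalizing m with
  | zero =>
    rcases (hπ m).prefix_ne_or_companion_prefix hs with ⟨-, hne⟩ | ⟨c, hc, hcs⟩
    · exact absurd hk.symm hne
    · exact ⟨m, c, hc, hcs, hs⟩
  | succ n ih =>
    rcases (hπ m).prefix_ne_or_companion_prefix hs with ⟨hs', -⟩ | ⟨c, hc, hcs⟩
    · exact ih hs' (by omega) (by rwa [show m + 1 + n + 1 = m + (n + 1) + 1 by omega])
    · exact ⟨m, c, hc, hcs, hs⟩

end CyclicTree

theorem stmt7_general (C : CyclicTree) (π : ℕ → List ℕ) (hπ : C.IsPath π) :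
    ∀ s ∈ PathInf π, ∃ t ∈ PathOcc π, ∃ c : List ℕ,
      C.β t = some c ∧ c <+: s ∧ s <+: t := by
  intro s hs
  obtain ⟨m, -, hm⟩ := hs 0
  obtain ⟨k, hk, hks⟩ := hs (m + 1)
  obtain ⟨i, c, hc, hcs, hst⟩ :=
    CyclicTree.exists_bud_of_return hπ.2 (hm ▸ List.prefix_rfl) hk hks
  exact ⟨π i, ⟨i, rfl⟩, c, hc, hcs, hst⟩

/-- for an infinite path `π` through a finite cyclic tree with
`Inf(π) = Occ(π)`, letting `η = Occ(π) ∩ dom(β)`, every infinitely visited node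
`s` admits a bud `t ∈ η` with `β(t) ≤ s ≤ t` in the prefix order. -/
theorem stmt7 (C : CyclicTree) (π : ℕ → List ℕ) (hπ : C.IsPath π)
    (hOI : PathOcc π = PathInf π) :
    ∀ s ∈ PathInf π, ∃ t ∈ PathOcc π, ∃ c : List ℕ,
      C.β t = some c ∧ c <+: s ∧ s <+: t :=
  stmt7_general C π hπ
end

section
/- Resetting covered chips in descending order is always legal: if γ_1 < ... < γ_k are exactly the covered chips of a Safra board, then performing γ_k-reset, then γ_{k-1}-reset, ..., then γ_1-reset, each chip γ_{k-i} is still covered at the time its reset is performed. -/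
/-- The γ-reset of a stack `S`: keep only the chips `≤ γ` if `γ ∈ S`, otherwise
leave `S` unchanged. -/
def sreset {Θ : Type*} [LinearOrder Θ] [DecidableEq Θ] (S : Finset Θ) (γ : Θ) :
    Finset Θ :=
  if γ ∈ S then S.filter (· ≤ γ) else S

/-- A chip `δ` is covered in a board `σ` if it is the top (maximum) of no stack:
whenever `δ` occurs in a stack, some strictly larger chip also occurs in it. -/
def CoveredIn {Θ X A : Type*} [LinearOrder Θ]
    (σ : X → A → Finset (Finset Θ)) (δ : Θ) : Prop :=
  ∀ (x : X) (a : A) (S : Finset Θ), S ∈ σ x a → δ ∈ S → ∃ z ∈ S, δ < z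

/-- The γ-reset of a board: replace every stack `S` by `sreset S γ`. -/
def resetBoard {Θ X A : Type*} [LinearOrder Θ] [DecidableEq Θ]
    (σ : X → A → Finset (Finset Θ)) (γ : Θ) : X → A → Finset (Finset Θ) :=
  fun x a => (σ x a).image (fun S => sreset S γ)

/-- The boards resulting from successively resetting `d 0`, then `d 1`, …. -/
def boards {Θ X A : Type*} [LinearOrder Θ] [DecidableEq Θ]
    (σ : X → A → Finset (Finset Θ)) (d : ℕ → Θ) : ℕ → X → A → Finset (Finset Θ)
  | 0 => σ
  | i + 1 => resetBoard (boards σ d i) (d i)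

theorem CoveredIn.resetBoard_of_lt {Θ X A : Type*} [LinearOrder Θ] [DecidableEq Θ]
    {σ : X → A → Finset (Finset Θ)} {γ δ : Θ} (hc : CoveredIn σ δ) (hlt : δ < γ) :
    CoveredIn (resetBoard σ γ) δ := by
  intro x a S' hS' hδ
  obtain ⟨S, hS, rfl⟩ := Finset.mem_image.1 hS'
  by_cases hγ : γ ∈ S
  · -- the reset keeps `γ` itself, which lies above `δ`
    exact ⟨γ, by simp [sreset, hγ], hlt⟩
  · simp only [sreset, hγ, if_false] at hδ ⊢
    exact hc x a S hS hδ

theorem CoveredIn.boards {Θ X A : Type*} [LinearOrder Θ] [DecidableEq Θ]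
    {σ : X → A → Finset (Finset Θ)} {d : ℕ → Θ} {δ : Θ} (hc : CoveredIn σ δ) :
    ∀ n : ℕ, (∀ j < n, δ < d j) → CoveredIn (boards σ d n) δ
  | 0, _ => hc
  | n + 1, hlt =>
    (CoveredIn.boards hc n fun j hj => hlt j (by omega)).resetBoard_of_lt (hlt n n.lt_succ_self)

theorem stmt10_general {Θ X A : Type*} [LinearOrder Θ] [DecidableEq Θ]
    (σ : X → A → Finset (Finset Θ)) (k : ℕ) (d : ℕ → Θ)
    (hdesc : ∀ i j : ℕ, i < j → j < k → d j < d i)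
    (hcov : ∀ i < k, CoveredIn σ (d i)) :
    ∀ i < k, CoveredIn (boards σ d i) (d i) :=
  fun i hi => (hcov i hi).boards i fun j hj => hdesc j i hj hi

/-- resetting covered chips in descending order is always legal:
if `d 0 > d 1 > ⋯ > d (k-1)` enumerates exactly the covered chips of a Safra board
`σ` in descending order, then performing the `d 0`-reset, then the `d 1`-reset, …,
each chip `d i` is still covered on the board at the time its reset is performed. -/
theorem stmt10 {Θ X A : Type*} [LinearOrder Θ] [DecidableEq Θ]
    (σ : X → A → Finset (Finset Θ)) (k : ℕ) (d : ℕ → Θ)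
    (hdesc : ∀ i j : ℕ, i < j → j < k → d j < d i)
    (hcov : ∀ i < k, CoveredIn σ (d i))
    (hmem : ∀ i < k, ∃ (x : X) (a : A) (S : Finset Θ), S ∈ σ x a ∧ d i ∈ S)
    (hexact : ∀ δ : Θ, CoveredIn σ δ →
      (∃ (x : X) (a : A) (S : Finset Θ), S ∈ σ x a ∧ δ ∈ S) → ∃ i < k, d i = δ) :
    ∀ i < k, CoveredIn (boards σ d i) (d i) :=
  stmt10_general σ k d hdesc hcov
end
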